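/- arXiv:0707.1074 — 3 statements merged into one kernel-verified Lean document; each statement's English description precedes it below -/
import Mathlib

section
/- Let G₁ = (S₁, L₁, H₁) and G₂ = (S₂, L₂, H₂) be n-channel open quantum systems (so S₂ is unitary: S₂†S₂ = S₂S₂† = I), and let X be any bounded operator. Then the generator of the series product G₂ ◁ G₁ satisfies 𝒢_{G₂◁G₁}(X) = 𝓛_{L₁}(X) + 𝓛_{L₂}(X) + L₁†(S₂†XS₂ − X)L₁ + L₁†S₂†[X, L₂] + [L₂†, X]S₂L₁ − i[X, H₁ + H₂], where L₁†(S₂†XS₂ − X)L₁ = Σ_{j,l} (L₁)_j* ( Σ_k (S₂)_{kj}* X (S₂)_{kl} − δ_{jl} X ) (L₁)_l, L₁†S₂†[X, L₂] = Σ_{j,k} (L₁)_j* (S₂)_{kj}* [X, (L₂)_k], and [L₂†, X]S₂L₁ = Σ_{j,k} [(L₂)_j*, X] (S₂)_{jk} (L₁)_k. -/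
/-!
The Lindblad superoperator is quadratic in the coupling vector, so `𝓛_{L₂ + S₂L₁}` splits into
`𝓛_{L₂} + 𝓛_{S₂L₁}` and a symmetric cross term. Since `S₂†S₂ = I`, the map `L ↦ S₂L` preserves
`Σ_j L_j* L_j`, so `𝓛_{S₂L₁}` differs from `𝓛_{L₁}` only in the term `Σ_j L_j* X L_j`, which
yields `L₁†(S₂†XS₂ − X)L₁`. Finally, the commutator with the Hamiltonian correction
`Im{L₂†S₂L₁}` cancels the antisymmetric part of the cross term, leaving
`L₁†S₂†[X, L₂] + [L₂†, X]S₂L₁`.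
-/

noncomputable section

open Finset

variable {E : Type*} [NormedAddCommGroup E] [InnerProductSpace ℂ E] [CompleteSpace E]

/-- The Lindblad superoperator `𝓛_L(X) = (1/2) Σ_j (L_j* [X, L_j] + [L_j*, X] L_j)`. -/
def lindblad {ι : Type*} [Fintype ι] (L : ι → E →L[ℂ] E) (X : E →L[ℂ] E) : E →L[ℂ] E :=
  (2 : ℂ)⁻¹ • ∑ j, (star (L j) * ⁅X, L j⁆ + ⁅star (L j), X⁆ * L j)

/-- `Im{A} = (A - A*)/(2i)`. -/
def imOp (A : E →L[ℂ] E) : E →L[ℂ] E := (2 * Complex.I)⁻¹ • (A - star A)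

section MulVec

open Matrix

variable {R ι : Type*} [Ring R] [Fintype ι]

theorem sum_mul_mul_eq_sum_mul_mulVec (S : Matrix ι ι R) (L Y : ι → R) :
    ∑ j, ∑ k, Y j * S j k * L k = ∑ j, Y j * (S *ᵥ L) j := by
  simp only [Matrix.mulVec, dotProduct, mul_sum, mul_assoc]

variable [StarRing R]

theorem star_mulVec_apply (S : Matrix ι ι R) (L : ι → R) (k : ι) :
    star ((S *ᵥ L) k) = ∑ j, star (L j) * star (S k j) := by
  simp only [Matrix.mulVec, dotProduct, star_sum, star_mul]

theorem sum_star_mul_star_mul_eq_sum_star_mulVec_mul (S : Matrix ι ι R) (L Y : ι → R) :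
    ∑ j, ∑ k, star (L j) * star (S k j) * Y k = ∑ k, star ((S *ᵥ L) k) * Y k := by
  simp only [star_mulVec_apply, sum_mul]
  exact sum_comm

theorem sum_star_mulVec_mul_mulVec (S : Matrix ι ι R) (L : ι → R) (Y : R) :
    ∑ k, star ((S *ᵥ L) k) * Y * (S *ᵥ L) k
      = ∑ j, ∑ l, star (L j) * (∑ k, star (S k j) * Y * S k l) * L l := by
  simp_rw [star_mulVec_apply]
  simp only [Matrix.mulVec, dotProduct, sum_mul, mul_sum]
  refine (sum_congr rfl fun k _ => sum_comm).trans <| sum_comm.trans <|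
    sum_congr rfl fun j _ => sum_comm.trans <| sum_congr rfl fun l _ => sum_congr rfl fun k _ => ?_
  simp only [mul_assoc]

theorem sum_star_mulVec_mul_mulVec_of_conjTranspose_mul_self [DecidableEq ι]
    {S : Matrix ι ι R} (hS : Sᴴ * S = 1) (L : ι → R) :
    ∑ k, star ((S *ᵥ L) k) * (S *ᵥ L) k = ∑ j, star (L j) * L j := by
  have hS' : ∀ j l, ∑ k, star (S k j) * 1 * S k l = if j = l then 1 else 0 := fun j l => by
    simpa [Matrix.mul_apply, Matrix.one_apply] using congrFun (congrFun hS j) l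
  have h := sum_star_mulVec_mul_mulVec S L 1
  simp only [mul_one] at h hS'
  simp [h, hS']

end MulVec

section Lindblad

open Matrix

attribute [local instance 100] LieRing.ofAssociativeRing

variable {ι : Type*} [Fintype ι]

theorem lindblad_eq_sum_sub (L : ι → E →L[ℂ] E) (X : E →L[ℂ] E) :
    lindblad L X = ∑ j, star (L j) * X * L j
      - (2 : ℂ)⁻¹ • ((∑ j, star (L j) * L j) * X + X * ∑ j, star (L j) * L j) := by
  have h : ∀ j, star (L j) * ⁅X, L j⁆ + ⁅star (L j), X⁆ * L j
      = (2 : ℂ) • (star (L j) * X * L j) - (star (L j) * L j * X + X * (star (L j) * L j)) := by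
    intro j
    simp only [Ring.lie_def, mul_sub, sub_mul, mul_assoc, two_smul]
    abel
  rw [lindblad, sum_congr rfl fun j _ => h j, sum_sub_distrib, sum_add_distrib, ← smul_sum,
    ← sum_mul, ← mul_sum, smul_sub, smul_smul]
  norm_num

theorem lindblad_add (L K : ι → E →L[ℂ] E) (X : E →L[ℂ] E) :
    lindblad (L + K) X = lindblad L X + lindblad K X
      + (2 : ℂ)⁻¹ • ∑ j, (star (L j) * ⁅X, K j⁆ + ⁅star (L j), X⁆ * K j
          + star (K j) * ⁅X, L j⁆ + ⁅star (K j), X⁆ * L j) := by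
  simp only [lindblad, ← smul_add, ← sum_add_distrib]
  congr 1
  refine sum_congr rfl fun j _ => ?_
  simp only [Pi.add_apply, star_add, lie_add, add_lie, mul_add, add_mul]
  abel

theorem lindblad_mulVec_of_conjTranspose_mul_self [DecidableEq ι] {S : Matrix ι ι (E →L[ℂ] E)}
    (hS : Sᴴ * S = 1) (L : ι → E →L[ℂ] E) (X : E →L[ℂ] E) :
    lindblad (S *ᵥ L) X = lindblad L X
      + ∑ j, ∑ l, star (L j) * ((∑ k, star (S k j) * X * S k l) - if j = l then X else 0) * L l := by
  rw [lindblad_eq_sum_sub, lindblad_eq_sum_sub, sum_star_mulVec_mul_mulVec,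
    sum_star_mulVec_mul_mulVec_of_conjTranspose_mul_self hS]
  simp only [mul_sub, sub_mul, sum_sub_distrib, mul_ite, ite_mul, mul_zero, zero_mul, sum_ite_eq,
    mem_univ, if_true]
  abel

theorem neg_I_smul_lie_imOp (A X : E →L[ℂ] E) :
    (-Complex.I) • ⁅X, imOp A⁆ = -(2 : ℂ)⁻¹ • ⁅X, A - star A⁆ := by
  have hc : -Complex.I * (2 * Complex.I)⁻¹ = -(2 : ℂ)⁻¹ := by
    field_simp
  rw [imOp, Ring.lie_def, Ring.lie_def, mul_smul_comm, smul_mul_assoc, ← smul_sub, smul_smul, hc]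

theorem neg_I_smul_lie_add_imOp_add_cross (L K : ι → E →L[ℂ] E) (H X : E →L[ℂ] E) :
    (-Complex.I) • ⁅X, H + imOp (∑ j, star (L j) * K j)⁆
        + (2 : ℂ)⁻¹ • ∑ j, (star (L j) * ⁅X, K j⁆ + ⁅star (L j), X⁆ * K j
          + star (K j) * ⁅X, L j⁆ + ⁅star (K j), X⁆ * L j)
      = ∑ j, star (K j) * ⁅X, L j⁆ + ∑ j, ⁅star (L j), X⁆ * K j + (-Complex.I) • ⁅X, H⁆ := by
  have h : ∀ j, star (L j) * ⁅X, K j⁆ + ⁅star (L j), X⁆ * K j + star (K j) * ⁅X, L j⁆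
      + ⁅star (K j), X⁆ * L j - ⁅X, star (L j) * K j - star (K j) * L j⁆
      = 2 • (star (K j) * ⁅X, L j⁆ + ⁅star (L j), X⁆ * K j) := fun j => by
    simp only [Ring.lie_def]
    noncomm_ring
  have hcross : (-Complex.I) • ⁅X, imOp (∑ j, star (L j) * K j)⁆
        + (2 : ℂ)⁻¹ • ∑ j, (star (L j) * ⁅X, K j⁆ + ⁅star (L j), X⁆ * K j
          + star (K j) * ⁅X, L j⁆ + ⁅star (K j), X⁆ * L j)
      = ∑ j, star (K j) * ⁅X, L j⁆ + ∑ j, ⁅star (L j), X⁆ * K j := by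
    rw [neg_I_smul_lie_imOp, star_sum]
    simp only [star_mul, star_star]
    rw [neg_smul, neg_add_eq_sub, ← smul_sub, ← sum_sub_distrib, lie_sum, ← sum_sub_distrib,
      sum_congr rfl fun j _ => h j, ← smul_sum, two_nsmul, ← two_smul ℂ, smul_smul,
      inv_mul_cancel₀ two_ne_zero, one_smul, sum_add_distrib]
  rw [lie_add, smul_add, add_assoc, hcross, add_comm]

end Lindblad

theorem stmt_1_general {n : ℕ}
    (S₂ : Matrix (Fin n) (Fin n) (E →L[ℂ] E))
    (L₁ L₂ : Fin n → E →L[ℂ] E) (H₁ H₂ : E →L[ℂ] E)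
    (hS₂ : S₂.conjTranspose * S₂ = 1 ∧ S₂ * S₂.conjTranspose = 1)
    (X : E →L[ℂ] E) :
    (-Complex.I) • ⁅X, H₁ + H₂ + imOp (∑ j, ∑ k, star (L₂ j) * S₂ j k * L₁ k)⁆
        + lindblad (fun j => L₂ j + ∑ k, S₂ j k * L₁ k) X
      = lindblad L₁ X + lindblad L₂ X
        + (∑ j, ∑ l, star (L₁ j) *
            ((∑ k, star (S₂ k j) * X * S₂ k l) - if j = l then X else 0) * L₁ l)
        + (∑ j, ∑ k, star (L₁ j) * star (S₂ k j) * ⁅X, L₂ k⁆)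
        + (∑ j, ∑ k, ⁅star (L₂ j), X⁆ * S₂ j k * L₁ k)
        + (-Complex.I) • ⁅X, H₁ + H₂⁆ := by
  have hL : (fun j => L₂ j + ∑ k, S₂ j k * L₁ k) = L₂ + S₂.mulVec L₁ := rfl
  rw [hL, lindblad_add, lindblad_mulVec_of_conjTranspose_mul_self hS₂.1,
    sum_star_mul_star_mul_eq_sum_star_mulVec_mul S₂ L₁ fun k => ⁅X, L₂ k⁆,
    sum_mul_mul_eq_sum_mul_mulVec S₂ L₁ fun j => star (L₂ j),
    sum_mul_mul_eq_sum_mul_mulVec S₂ L₁ fun j => ⁅star (L₂ j), X⁆]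
  linear_combination (norm := abel) neg_I_smul_lie_add_imOp_add_cross L₂ (S₂.mulVec L₁) (H₁ + H₂) X

/-- the generator of the series product `G₂ ◁ G₁` of two `n`-channel open
quantum systems `G₁ = (S₁, L₁, H₁)`, `G₂ = (S₂, L₂, H₂)` satisfies
`𝒢_{G₂◁G₁}(X) = 𝓛_{L₁}(X) + 𝓛_{L₂}(X) + L₁†(S₂†XS₂ − X)L₁ + L₁†S₂†[X, L₂]
  + [L₂†, X]S₂L₁ − i[X, H₁ + H₂]`.
Here `G₂ ◁ G₁ = (S₂S₁, L₂ + S₂L₁, H₁ + H₂ + Im{L₂†S₂L₁})`, and the generator of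
`(S, L, H)` is `𝒢(X) = -i[X,H] + 𝓛_L(X)`. -/
theorem stmt_1 {n : ℕ}
    (S₁ S₂ : Matrix (Fin n) (Fin n) (E →L[ℂ] E))
    (L₁ L₂ : Fin n → E →L[ℂ] E) (H₁ H₂ : E →L[ℂ] E)
    (hS₁ : S₁.conjTranspose * S₁ = 1 ∧ S₁ * S₁.conjTranspose = 1)
    (hS₂ : S₂.conjTranspose * S₂ = 1 ∧ S₂ * S₂.conjTranspose = 1)
    (hH₁ : IsSelfAdjoint H₁) (hH₂ : IsSelfAdjoint H₂)
    (X : E →L[ℂ] E) :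
    (-Complex.I) • ⁅X, H₁ + H₂ + imOp (∑ j, ∑ k, star (L₂ j) * S₂ j k * L₁ k)⁆
        + lindblad (fun j => L₂ j + ∑ k, S₂ j k * L₁ k) X
      = lindblad L₁ X + lindblad L₂ X
        + (∑ j, ∑ l, star (L₁ j) *
            ((∑ k, star (S₂ k j) * X * S₂ k l) - if j = l then X else 0) * L₁ l)
        + (∑ j, ∑ k, star (L₁ j) * star (S₂ k j) * ⁅X, L₂ k⁆)
        + (∑ j, ∑ k, ⁅star (L₂ j), X⁆ * S₂ j k * L₁ k)
        + (-Complex.I) • ⁅X, H₁ + H₂⁆ :=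
  stmt_1_general S₂ L₁ L₂ H₁ H₂ hS₂ X
end
end

section
/- (Positive Real Lemma, infinitesimal form.) Let L = (L_j) be an n-vector, Z_L = (Z_{L,j}) an n-vector, K = (K_k) an m-vector, and Z_K = (Z_{K,k}) an m-vector of bounded operators; let H be bounded self-adjoint, V bounded self-adjoint nonnegative, N bounded, and λ ≥ 0 a real number. Then the following are equivalent. (a) For every n-vector w = (w_j) and m-vector v = (v_k) of bounded operators such that each w_j, w_j*, v_k, v_k* commutes with each of V, H, N, N* and with each L_j, L_j*, K_k, K_k*, Z_{L,j}, Z_{L,j}*, Z_{K,k}, Z_{K,k}*, one has 𝓛_L(V) − i[V, H] + Σ_j ( w_j*([V, L_j] − Z_{L,j}) + ([L_j*, V] − Z_{L,j}*)w_j ) + Σ_k ( v_k*([V, K_k] − Z_{K,k}) + ([K_k*, V] − Z_{K,k}*)v_k ) + N*N − λ·I ≤ 0. (b) 𝓛_L(V) − i[V, H] + N*N − λ·I ≤ 0, and Z_{L,j} = [V, L_j] for every j and Z_{K,k} = [V, K_k] for every k. -/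
noncomputable section

open Finset
open scoped ComplexOrder

variable {E : Type*} [NormedAddCommGroup E] [InnerProductSpace ℂ E] [CompleteSpace E]

/-- Operator ordering: `A ≤ B` iff `⟨ψ, Aψ⟩ ≤ ⟨ψ, Bψ⟩` for all `ψ`. -/
def opLE (A B : E →L[ℂ] E) : Prop :=
  ∀ ψ : E, (inner ℂ ψ (A ψ) : ℂ) ≤ (inner ℂ ψ (B ψ) : ℂ)

/-- The set of plant variables: `V, H, N, N*` together with all `L_j, L_j*, K_k, K_k*,
Z_{L,j}, Z_{L,j}*, Z_{K,k}, Z_{K,k}*`. -/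
def plantSet {n m : ℕ} (L ZL : Fin n → E →L[ℂ] E) (K ZK : Fin m → E →L[ℂ] E)
    (Hm V N : E →L[ℂ] E) : Set (E →L[ℂ] E) :=
  {V, Hm, N, star N} ∪ Set.range L ∪ Set.range (star ∘ L)
    ∪ Set.range K ∪ Set.range (star ∘ K)
    ∪ Set.range ZL ∪ Set.range (star ∘ ZL)
    ∪ Set.range ZK ∪ Set.range (star ∘ ZK)

/-! Write `B_j = [V, L_j] − Z_{L,j}` and `C_k = [V, K_k] − Z_{K,k}`. Since `V` is self-adjoint,
`[L_j*, V] − Z_{L,j}* = B_j*`, so the exosystem enters the dissipation inequality only through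
the cross term `Σ_j (w_j* B_j + B_j* w_j) + Σ_k (v_k* C_k + C_k* v_k)`, which vanishes when all
`B_j`, `C_k` do. Conversely, scalar exosystems `w_j = c · I` commute with every plant variable;
a single such coordinate turns the cross term into `c̄ B_j + c B_j*`, whose quadratic form
`2 Re (c̄ ⟨ψ, B_j ψ⟩)` is unbounded above in `c` unless `⟨ψ, B_j ψ⟩ = 0`, and over `ℂ` an
operator with vanishing quadratic form is zero. -/

section

variable {R : Type*} [Ring R] [StarRing R] {ι : Type*} [Fintype ι]

def crossTerm (w B : ι → R) : R :=
  ∑ j, (star (w j) * B j + star (B j) * w j)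

@[simp]
lemma crossTerm_zero_left (B : ι → R) : crossTerm 0 B = 0 := by
  simp [crossTerm]

@[simp]
lemma crossTerm_zero_right (w : ι → R) : crossTerm w 0 = 0 := by
  simp [crossTerm]

lemma crossTerm_single_smul_one [Algebra ℂ R] [StarModule ℂ R] [DecidableEq ι]
    (B : ι → R) (j : ι) (c : ℂ) :
    crossTerm (fun i => (Pi.single j c : _ → ℂ) i • (1 : R)) B =
      starRingEnd ℂ c • B j + c • star (B j) := by
  rw [crossTerm, Finset.sum_eq_single j (fun i _ hi => by simp [hi]) (by simp)]
  simp [star_smul]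

lemma IsSelfAdjoint.lie_star_sub_star {V : R} (hV : IsSelfAdjoint V) (X Z : R) :
    ⁅star X, V⁆ - star Z = star (⁅V, X⁆ - Z) := by
  simp only [Ring.lie_def, star_sub, star_mul, hV.star_eq]

end

lemma eq_zero_of_forall_add_mul_nonpos {r s : ℝ} (h : ∀ t : ℝ, r + t * s ≤ 0) : s = 0 := by
  by_contra hs
  have := h ((|r| + 1) / s)
  rw [div_mul_cancel₀ _ hs] at this
  linarith [neg_abs_le r]

lemma ContinuousLinearMap.inner_star_apply_self (B : E →L[ℂ] E) (ψ : E) :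
    inner ℂ ψ (star B ψ) = starRingEnd ℂ (inner ℂ ψ (B ψ)) := by
  rw [ContinuousLinearMap.star_eq_adjoint, ContinuousLinearMap.adjoint_inner_right,
    inner_conj_symm]

lemma ContinuousLinearMap.eq_zero_of_forall_inner_apply_self {F : Type*} [NormedAddCommGroup F]
    [InnerProductSpace ℂ F] {B : F →L[ℂ] F} (h : ∀ ψ, inner ℂ ψ (B ψ) = 0) : B = 0 := by
  have : (B : F →ₗ[ℂ] F) = 0 :=
    (inner_map_self_eq_zero _).mp fun ψ => by rw [← inner_conj_symm]; simp [h ψ]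
  exact ContinuousLinearMap.coe_injective this

lemma eq_zero_of_forall_opLE_add_smul_add_smul_star {A B : E →L[ℂ] E}
    (h : ∀ c : ℂ, opLE (A + (starRingEnd ℂ c • B + c • star B)) 0) : B = 0 := by
  refine ContinuousLinearMap.eq_zero_of_forall_inner_apply_self fun ψ => ?_
  obtain ⟨b, hb⟩ : ∃ b, inner ℂ ψ (B ψ) = b := ⟨_, rfl⟩
  suffices 2 * Complex.normSq b = 0 by simpa [hb] using this
  refine eq_zero_of_forall_add_mul_nonpos (r := (inner ℂ ψ (A ψ)).re) fun t => ?_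
  -- with `c = t b` the cross term contributes `2 t |b|²` to the real part
  have hc := (Complex.le_def.mp (h (t * b) ψ)).1
  simp only [add_apply, smul_apply, inner_add_right, inner_smul_right, ContinuousLinearMap.inner_star_apply_self,
    zero_apply, inner_zero_right, Complex.add_re, Complex.zero_re, hb] at hc
  convert hc using 2
  simp only [map_mul, Complex.conj_ofReal, Complex.mul_re, Complex.mul_im, Complex.ofReal_re,
    Complex.ofReal_im, Complex.conj_re, Complex.conj_im, Complex.normSq_apply]
  ring

lemma forall_opLE_add_crossTerm_iff {ι κ : Type*} [Fintype ι] [Fintype κ]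
    (A : E →L[ℂ] E) (B : ι → E →L[ℂ] E) (C : κ → E →L[ℂ] E) (P : (E →L[ℂ] E) → Prop)
    (hP : ∀ c : ℂ, P (c • 1)) :
    (∀ w v, (∀ j, P (w j)) → (∀ k, P (v k)) → opLE (A + crossTerm w B + crossTerm v C) 0) ↔
      opLE A 0 ∧ B = 0 ∧ C = 0 := by
  classical
  have hP0 : P 0 := by simpa using hP 0
  constructor
  · intro h
    refine ⟨by simpa using h 0 0 (fun _ => hP0) (fun _ => hP0), funext fun j => ?_,
      funext fun k => ?_⟩
    · refine eq_zero_of_forall_opLE_add_smul_add_smul_star (A := A) fun c => ?_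
      simpa [crossTerm_single_smul_one] using
        h (fun i => (Pi.single j c : _ → ℂ) i • 1) 0 (fun _ => hP _) (fun _ => hP0)
    · refine eq_zero_of_forall_opLE_add_smul_add_smul_star (A := A) fun c => ?_
      simpa [crossTerm_single_smul_one] using
        h 0 (fun i => (Pi.single k c : _ → ℂ) i • 1) (fun _ => hP0) (fun _ => hP _)
  · rintro ⟨hA, rfl, rfl⟩ w v - -
    simpa using hA

theorem stmt_8_general {n m : ℕ}
    (L ZL : Fin n → E →L[ℂ] E) (K ZK : Fin m → E →L[ℂ] E)
    (Hm V N : E →L[ℂ] E) (lam : ℝ)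
    (hV : IsSelfAdjoint V) :
    (∀ (w : Fin n → E →L[ℂ] E) (v : Fin m → E →L[ℂ] E),
        (∀ j, ∀ a ∈ plantSet L ZL K ZK Hm V N,
          Commute (w j) a ∧ Commute (star (w j)) a) →
        (∀ k, ∀ a ∈ plantSet L ZL K ZK Hm V N,
          Commute (v k) a ∧ Commute (star (v k)) a) →
        opLE (lindblad L V + (-Complex.I) • ⁅V, Hm⁆
          + (∑ j, (star (w j) * (⁅V, L j⁆ - ZL j)
              + (⁅star (L j), V⁆ - star (ZL j)) * w j))
          + (∑ k, (star (v k) * (⁅V, K k⁆ - ZK k)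
              + (⁅star (K k), V⁆ - star (ZK k)) * v k))
          + star N * N - (lam : ℂ) • 1) 0)
      ↔ (opLE (lindblad L V + (-Complex.I) • ⁅V, Hm⁆ + star N * N - (lam : ℂ) • 1) 0
          ∧ (∀ j, ZL j = ⁅V, L j⁆) ∧ (∀ k, ZK k = ⁅V, K k⁆)) := by
  set A := lindblad L V + (-Complex.I) • ⁅V, Hm⁆ + star N * N - (lam : ℂ) • 1 with hA
  have hsplit (P Q : E →L[ℂ] E) : lindblad L V + (-Complex.I) • ⁅V, Hm⁆ + P + Q
      + star N * N - (lam : ℂ) • 1 = A + P + Q := by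
    rw [hA]; abel
  have hscalar (c : ℂ) (a : E →L[ℂ] E) : Commute (c • 1) a ∧ Commute (star (c • 1)) a := by
    simpa using ⟨(Commute.one_left a).smul_left c, (Commute.one_left a).smul_left (star c)⟩
  simp only [hV.lie_star_sub_star, hsplit]
  refine (forall_opLE_add_crossTerm_iff A (fun j => ⁅V, L j⁆ - ZL j) (fun k => ⁅V, K k⁆ - ZK k)
    (fun x => ∀ a ∈ plantSet L ZL K ZK Hm V N, Commute x a ∧ Commute (star x) a)
    fun c a _ => hscalar c a).trans ?_
  simp [funext_iff, sub_eq_zero, eq_comm]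

/-- Positive Real Lemma, infinitesimal form: the dissipation inequality
`𝓛_L(V) − i[V,H] + Σ_j (w_j*([V,L_j] − Z_{L,j}) + ([L_j*,V] − Z_{L,j}*)w_j)
  + Σ_k (v_k*([V,K_k] − Z_{K,k}) + ([K_k*,V] − Z_{K,k}*)v_k) + N*N − λI ≤ 0`
holds for all `w, v` (with `w_j, w_j*, v_k, v_k*` commuting with all plant variables)
iff `𝓛_L(V) − i[V,H] + N*N − λI ≤ 0`, `Z_{L,j} = [V,L_j]` and `Z_{K,k} = [V,K_k]`. -/
theorem stmt_8 {n m : ℕ}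
    (L ZL : Fin n → E →L[ℂ] E) (K ZK : Fin m → E →L[ℂ] E)
    (Hm V N : E →L[ℂ] E) (lam : ℝ)
    (hHm : IsSelfAdjoint Hm) (hV : IsSelfAdjoint V)
    (hVpos : ∀ ψ : E, 0 ≤ (inner ℂ ψ (V ψ) : ℂ))
    (hlam : 0 ≤ lam) :
    (∀ (w : Fin n → E →L[ℂ] E) (v : Fin m → E →L[ℂ] E),
        (∀ j, ∀ a ∈ plantSet L ZL K ZK Hm V N,
          Commute (w j) a ∧ Commute (star (w j)) a) →
        (∀ k, ∀ a ∈ plantSet L ZL K ZK Hm V N,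
          Commute (v k) a ∧ Commute (star (v k)) a) →
        opLE (lindblad L V + (-Complex.I) • ⁅V, Hm⁆
          + (∑ j, (star (w j) * (⁅V, L j⁆ - ZL j)
              + (⁅star (L j), V⁆ - star (ZL j)) * w j))
          + (∑ k, (star (v k) * (⁅V, K k⁆ - ZK k)
              + (⁅star (K k), V⁆ - star (ZK k)) * v k))
          + star N * N - (lam : ℂ) • 1) 0)
      ↔ (opLE (lindblad L V + (-Complex.I) • ⁅V, Hm⁆ + star N * N - (lam : ℂ) • 1) 0
          ∧ (∀ j, ZL j = ⁅V, L j⁆) ∧ (∀ k, ZK k = ⁅V, K k⁆)) :=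
  stmt_8_general L ZL K ZK Hm V N lam hV
end
end

section
/- Let A, B be bounded self-adjoint operators and C a bounded operator on a complex Hilbert space 𝖧. If w*Aw ≤ B + w*C + C*w for every bounded operator w on 𝖧, then A ≤ 0. -/
/-!
Testing the hypothesis with the scalar operators `w = t • 1`, `t` real, gives
`t² ⟪ψ, A ψ⟫ ≤ ⟪ψ, B ψ⟫ + t ⟪ψ, (C + C*) ψ⟫` in the complex order. Real parts: a quadratic
bounded above by an affine function has non-positive leading coefficient. Imaginary parts: the
order forces equality, and comparing `t = 0, ±1` shows that `⟪ψ, A ψ⟫` is real.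
-/

noncomputable section

open Finset
open scoped ComplexOrder

variable {E : Type*} [NormedAddCommGroup E] [InnerProductSpace ℂ E] [CompleteSpace E]

theorem nonpos_of_forall_sq_mul_le_add_mul {a b c : ℝ} (h : ∀ t : ℝ, t ^ 2 * a ≤ b + t * c) :
    a ≤ 0 := by
  have h_even : ∀ t : ℝ, t ^ 2 * a ≤ b := fun t => by
    linarith [h t, h (-t)]
  by_contra! ha
  have hpos : 0 ≤ (|b| + 1) / a := by positivity
  have := h_even √((|b| + 1) / a)
  rw [Real.sq_sqrt hpos, div_mul_cancel₀ _ ha.ne'] at this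
  linarith [le_abs_self b]

theorem Complex.nonpos_of_forall_sq_mul_le_add_mul {a b c : ℂ}
    (h : ∀ t : ℝ, (t : ℂ) ^ 2 * a ≤ b + t * c) : a ≤ 0 := by
  have h_parts : ∀ t : ℝ, t ^ 2 * a.re ≤ b.re + t * c.re ∧ t ^ 2 * a.im = b.im + t * c.im :=
    fun t => by simpa [Complex.le_def, pow_two] using h t
  rw [Complex.le_def, Complex.zero_re, Complex.zero_im]
  constructor
  · exact _root_.nonpos_of_forall_sq_mul_le_add_mul fun t => (h_parts t).1
  · linarith [(h_parts 0).2, (h_parts 1).2, (h_parts (-1)).2]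

theorem stmt_13_general (A B C : E →L[ℂ] E)
    (h : ∀ w : E →L[ℂ] E, opLE (star w * A * w) (B + star w * C + star C * w)) :
    opLE A 0 := by
  intro ψ
  rw [zero_apply, inner_zero_right]
  refine Complex.nonpos_of_forall_sq_mul_le_add_mul
    (b := inner ℂ ψ (B ψ)) (c := inner ℂ ψ (C ψ) + inner ℂ ψ (star C ψ)) fun t => ?_
  have h_scalar := h ((t : ℂ) • 1) ψ
  simp only [star_smul, star_one, mul_apply_eq_comp, smul_apply,
    one_apply_eq_self, add_apply, map_smul, inner_smul_right,
    inner_add_right, Complex.conj_ofReal, RCLike.star_def] at h_scalar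
  convert h_scalar using 1 <;> ring

/-- if `A, B` are bounded self-adjoint operators and `C` is bounded, and
`w*Aw ≤ B + w*C + C*w` for every bounded operator `w`, then `A ≤ 0`. -/
theorem stmt_13 (A B C : E →L[ℂ] E)
    (hA : IsSelfAdjoint A) (hB : IsSelfAdjoint B)
    (h : ∀ w : E →L[ℂ] E, opLE (star w * A * w) (B + star w * C + star C * w)) :
    opLE A 0 :=
  stmt_13_general A B C h
end
end
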